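/- Let S₀ determine a strictly weak, left invariant sub-Finsler metric on a Hilbertian H-type group M = V ⊕ W. Then for all p, q ∈ M with π₁(p) = π₁(q) the sub-Finsler distance satisfies ρ_S(p,q) = 0; that is, for every ε > 0 there exists a horizontal curve γ with γ(0) = p, γ(1) = q and ℓ_S(γ) < ε. -/

import Mathlib

open scoped RealInnerProductSpace

/-- A Hilbertian H-type group: a real Hilbert space `M` with an orthogonal decomposition
`M = V ⊕ W` into nontrivial closed subspaces, `W` finite dimensional, a continuous
skew-symmetric Lie bracket with `[M,M] ⊆ W`, `[M,W] = 0`, and the map `J` determined by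
`⟪J z x, y⟫ = ⟪z, [x,y]⟫` satisfying `J_z ∘ J_z = -‖z‖² id` on `V`. -/
structure HTypeGroup (M : Type*) [NormedAddCommGroup M] [InnerProductSpace ℝ M]
    [CompleteSpace M] where
  V : Submodule ℝ M
  W : Submodule ℝ M
  V_closed : IsClosed (V : Set M)
  W_closed : IsClosed (W : Set M)
  V_nontrivial : V ≠ ⊥
  W_nontrivial : W ≠ ⊥
  W_findim : FiniteDimensional ℝ ↥W
  orthogonal : ∀ v ∈ V, ∀ w ∈ W, ⟪v, w⟫ = 0
  proj1 : M →L[ℝ] M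
  proj2 : M →L[ℝ] M
  proj1_mem : ∀ v : M, proj1 v ∈ V
  proj2_mem : ∀ v : M, proj2 v ∈ W
  proj_add : ∀ v : M, proj1 v + proj2 v = v
  bracket : M →L[ℝ] M →L[ℝ] M
  bracket_skew : ∀ u v : M, bracket u v = - bracket v u
  bracket_mem_W : ∀ u v : M, bracket u v ∈ W
  bracket_W : ∀ u : M, ∀ w ∈ W, bracket u w = 0
  Jmap : M →L[ℝ] M →L[ℝ] M
  Jmap_mem_V : ∀ z ∈ W, ∀ x ∈ V, Jmap z x ∈ V
  Jmap_inner : ∀ z ∈ W, ∀ x ∈ V, ∀ y ∈ V, ⟪Jmap z x, y⟫ = ⟪z, bracket x y⟫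
  Jmap_sq : ∀ z ∈ W, ∀ x ∈ V, Jmap z (Jmap z x) = -(‖z‖ ^ 2) • x

/-- A continuous, piecewise continuously differentiable curve on `[0,1]`: a continuous
curve together with a derivative function which is the honest derivative away from a
finite exceptional set, and which is interval integrable. -/
structure PC1Curve (M : Type*) [NormedAddCommGroup M] [NormedSpace ℝ M] where
  toFun : ℝ → M
  deriv : ℝ → M
  continuousOn : ContinuousOn toFun (Set.Icc 0 1)
  exc : Set ℝ
  exc_finite : exc.Finite
  hasDeriv : ∀ t ∈ Set.Ioo (0 : ℝ) 1 \ exc, HasDerivAt toFun (deriv t) t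
  deriv_integrable : IntervalIntegrable deriv MeasureTheory.volume 0 1

/-- A horizontal curve: a piecewise `C¹` curve `γ = γ₁ + γ₂` (with `γᵢ = πᵢ ∘ γ`) such that
`γ₂'(t) = (1/2)[γ₁(t), γ₁'(t)]` wherever the derivative exists. -/
def IsHorizontal {M : Type*} [NormedAddCommGroup M] [InnerProductSpace ℝ M]
    [CompleteSpace M] (H : HTypeGroup M) (γ : PC1Curve M) : Prop :=
  ∀ t ∈ Set.Ioo (0 : ℝ) 1 \ γ.exc,
    H.proj2 (γ.deriv t) = (2⁻¹ : ℝ) • H.bracket (H.proj1 (γ.toFun t)) (H.proj1 (γ.deriv t))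

/-- The sub-Finsler length `ℓ_S(γ) = ∫₀¹ S₀(γ₁'(t)) dt` of a curve, with respect to the
left invariant sub-Finsler metric determined by the norm `S₀` on `V`. -/
noncomputable def subFinslerLength {M : Type*} [NormedAddCommGroup M] [InnerProductSpace ℝ M]
    [CompleteSpace M] (H : HTypeGroup M) (S₀ : M → ℝ) (γ : PC1Curve M) : ℝ :=
  ∫ t in (0 : ℝ)..1, S₀ (H.proj1 (γ.deriv t))

/-- The sub-Finsler distance `ρ_S(p, q)`: the infimum of the sub-Finsler lengths of
horizontal curves joining `p` to `q`. -/
noncomputable def subFinslerDist {M : Type*} [NormedAddCommGroup M] [InnerProductSpace ℝ M]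
    [CompleteSpace M] (H : HTypeGroup M) (S₀ : M → ℝ) (p q : M) : ℝ :=
  sInf {L : ℝ | ∃ γ : PC1Curve M, IsHorizontal H γ ∧ γ.toFun 0 = p ∧ γ.toFun 1 = q ∧
    L = subFinslerLength H S₀ γ}

/-!
Write `q = p + w` with `w ∈ W`. For `a, b ∈ V` the horizontal lift through `p` of the ellipse
`t ↦ (cos 2πt - 1) a + sin 2πt b` closes up in `V` and ends at `p + π [a, b]` (the enclosed
signed area), while its length is at most `2π (S₀ a + S₀ b)`. For a unit vector `u ∈ V` and
`r > 0`, the H-type identities `[u, J_w u] = w` and `‖J_w u‖ = ‖w‖` show that `a = r⁻¹ u`,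
`b = r J_w u` satisfy `[a, b] = w` and `S₀ a + S₀ b ≤ r⁻¹ S₀ u + r c₀ ‖w‖`. Choosing `r` small
first and then, by strict weakness, `u` with `S₀ u` small compared with `r` makes the length
as small as we like.
-/

open scoped Real

section Seminorm

variable {E : Type*} [NormedAddCommGroup E] [NormedSpace ℝ E] {V : Submodule ℝ E} {S : E → ℝ}

lemma nonneg_of_add_le_of_smul_eq (hadd : ∀ u ∈ V, ∀ v ∈ V, S (u + v) ≤ S u + S v)
    (hsmul : ∀ (c : ℝ), ∀ v ∈ V, S (c • v) = |c| * S v) {v : E} (hv : v ∈ V) : 0 ≤ S v := by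
  have h := hadd v hv ((-1 : ℝ) • v) (V.smul_mem _ hv)
  have h0 : v + (-1 : ℝ) • v = (0 : ℝ) • v := by module
  rw [hsmul _ _ hv, h0, hsmul _ _ hv] at h
  norm_num at h
  linarith

lemma exists_norm_eq_one_lt_of_not_coercive (hsmul : ∀ (c : ℝ), ∀ v ∈ V, S (c • v) = |c| * S v)
    (hweak : ¬ ∃ c > (0 : ℝ), ∀ v ∈ V, c * ‖v‖ ≤ S v) {c : ℝ} (hc : 0 < c) :
    ∃ u ∈ V, ‖u‖ = 1 ∧ S u < c := by
  push Not at hweak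
  obtain ⟨v, hvV, hv⟩ := hweak c hc
  have hv0 : v ≠ 0 := by
    rintro rfl
    have := hsmul 0 0 V.zero_mem
    simp_all
  refine ⟨‖v‖⁻¹ • v, V.smul_mem _ hvV, norm_smul_inv_norm hv0, ?_⟩
  rw [hsmul _ _ hvV, abs_inv, abs_norm, inv_mul_lt_iff₀ (norm_pos_iff.mpr hv0), mul_comm]
  exact hv

end Seminorm

section EllipseLoop

variable {E : Type*} [NormedAddCommGroup E] [NormedSpace ℝ E]

noncomputable def ellipseLoop (a b : E) (t : ℝ) : E :=
  (Real.cos (2 * π * t) - 1) • a + Real.sin (2 * π * t) • b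

noncomputable def ellipseLoopDeriv (a b : E) (t : ℝ) : E :=
  (-(2 * π * Real.sin (2 * π * t))) • a + (2 * π * Real.cos (2 * π * t)) • b

lemma hasDerivAt_ellipseLoop (a b : E) (t : ℝ) :
    HasDerivAt (ellipseLoop a b) (ellipseLoopDeriv a b t) t := by
  have hc := (((hasDerivAt_id t).const_mul (2 * π)).cos).sub_const 1
  have hs := ((hasDerivAt_id t).const_mul (2 * π)).sin
  refine ((hc.smul_const a).add (hs.smul_const b)).congr_deriv ?_
  simp only [ellipseLoopDeriv, id_eq]
  module

lemma continuous_ellipseLoopDeriv (a b : E) : Continuous (ellipseLoopDeriv a b) := by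
  unfold ellipseLoopDeriv; fun_prop

lemma ellipseLoop_mem {V : Submodule ℝ E} {a b : E} (ha : a ∈ V) (hb : b ∈ V) (t : ℝ) :
    ellipseLoop a b t ∈ V :=
  V.add_mem (V.smul_mem _ ha) (V.smul_mem _ hb)

lemma ellipseLoopDeriv_mem {V : Submodule ℝ E} {a b : E} (ha : a ∈ V) (hb : b ∈ V) (t : ℝ) :
    ellipseLoopDeriv a b t ∈ V :=
  V.add_mem (V.smul_mem _ ha) (V.smul_mem _ hb)

lemma ellipseLoop_zero (a b : E) : ellipseLoop a b 0 = 0 := by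
  simp [ellipseLoop]

lemma ellipseLoop_one (a b : E) : ellipseLoop a b 1 = 0 := by
  simp [ellipseLoop]

lemma ellipseLoopDeriv_le {V : Submodule ℝ E} {S : E → ℝ} (hadd : ∀ u ∈ V, ∀ v ∈ V, S (u + v) ≤ S u + S v)
    (hsmul : ∀ (c : ℝ), ∀ v ∈ V, S (c • v) = |c| * S v) {a b : E} (ha : a ∈ V) (hb : b ∈ V)
    (t : ℝ) : S (ellipseLoopDeriv a b t) ≤ 2 * π * (S a + S b) := by
  have hsin : |-(2 * π * Real.sin (2 * π * t))| ≤ 2 * π := by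
    rw [abs_neg, abs_mul, abs_of_pos Real.two_pi_pos]
    exact mul_le_of_le_one_right Real.two_pi_pos.le (Real.abs_sin_le_one _)
  have hcos : |2 * π * Real.cos (2 * π * t)| ≤ 2 * π := by
    rw [abs_mul, abs_of_pos Real.two_pi_pos]
    exact mul_le_of_le_one_right Real.two_pi_pos.le (Real.abs_cos_le_one _)
  have hSa := nonneg_of_add_le_of_smul_eq hadd hsmul ha
  have hSb := nonneg_of_add_le_of_smul_eq hadd hsmul hb
  calc S (ellipseLoopDeriv a b t)
      ≤ |-(2 * π * Real.sin (2 * π * t))| * S a + |2 * π * Real.cos (2 * π * t)| * S b := by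
        rw [← hsmul _ _ ha, ← hsmul _ _ hb]
        exact hadd _ (V.smul_mem _ ha) _ (V.smul_mem _ hb)
    _ ≤ 2 * π * S a + 2 * π * S b := by gcongr
    _ = 2 * π * (S a + S b) := by ring

end EllipseLoop

namespace HTypeGroup

variable {M : Type*} [NormedAddCommGroup M] [InnerProductSpace ℝ M] [CompleteSpace M]
  (H : HTypeGroup M)

lemma eq_zero_of_mem_V_of_mem_W {x : M} (hV : x ∈ H.V) (hW : x ∈ H.W) : x = 0 :=
  inner_self_eq_zero.mp (H.orthogonal x hV x hW)

lemma proj1_add_of_mem {v w : M} (hv : v ∈ H.V) (hw : w ∈ H.W) : H.proj1 (v + w) = v := by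
  have h : H.proj1 (v + w) - v = w - H.proj2 (v + w) := by
    rw [sub_eq_sub_iff_add_eq_add, H.proj_add, add_comm]
  refine sub_eq_zero.mp (H.eq_zero_of_mem_V_of_mem_W (H.V.sub_mem (H.proj1_mem _) hv) ?_)
  exact h ▸ H.W.sub_mem hw (H.proj2_mem _)

lemma proj2_add_of_mem {v w : M} (hv : v ∈ H.V) (hw : w ∈ H.W) : H.proj2 (v + w) = w := by
  have h := H.proj_add (v + w)
  rw [H.proj1_add_of_mem hv hw] at h
  exact add_left_cancel h

lemma mem_W_of_proj1_eq_zero {x : M} (hx : H.proj1 x = 0) : x ∈ H.W := by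
  have h := H.proj_add x
  rw [hx, zero_add] at h
  exact h ▸ H.proj2_mem x

lemma bracket_self (x : M) : H.bracket x x = 0 := by
  have h : (2 : ℝ) • H.bracket x x = 0 := by
    rw [two_smul]
    nth_rewrite 1 [H.bracket_skew x x]
    exact neg_add_cancel _
  exact (smul_eq_zero.mp h).resolve_left two_ne_zero

lemma inner_Jmap_left {z x y : M} (hz : z ∈ H.W) (hx : x ∈ H.V) (hy : y ∈ H.V) :
    ⟪H.Jmap z x, y⟫ = -⟪x, H.Jmap z y⟫ := by
  rw [H.Jmap_inner z hz x hx y hy, H.bracket_skew x y, inner_neg_right,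
    ← H.Jmap_inner z hz y hy x hx, real_inner_comm]

lemma Jmap_Jmap_add_Jmap_Jmap {z w a : M} (hz : z ∈ H.W) (hw : w ∈ H.W) (ha : a ∈ H.V) :
    H.Jmap z (H.Jmap w a) + H.Jmap w (H.Jmap z a) = (-(2 * ⟪z, w⟫)) • a := by
  have h := H.Jmap_sq (z + w) (H.W.add_mem hz hw) a ha
  simp only [map_add, add_apply, H.Jmap_sq z hz a ha,
    H.Jmap_sq w hw a ha, norm_add_sq_real] at h
  calc _ = -((‖z‖ ^ 2 + 2 * ⟪z, w⟫ + ‖w‖ ^ 2)) • a - (-(‖z‖ ^ 2) • a) - (-(‖w‖ ^ 2) • a) := by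
        rw [← h]; abel
    _ = _ := by module

lemma inner_Jmap_Jmap {z w a : M} (hz : z ∈ H.W) (hw : w ∈ H.W) (ha : a ∈ H.V) :
    ⟪H.Jmap z a, H.Jmap w a⟫ = ⟪z, w⟫ * ‖a‖ ^ 2 := by
  have h₁ := H.inner_Jmap_left hz ha (H.Jmap_mem_V w hw a ha)
  have h₂ := H.inner_Jmap_left hw ha (H.Jmap_mem_V z hz a ha)
  have h₃ := congrArg (⟪a, ·⟫) (H.Jmap_Jmap_add_Jmap_Jmap hz hw ha)
  simp only [inner_add_right, real_inner_smul_right, real_inner_self_eq_norm_sq] at h₃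
  rw [real_inner_comm] at h₂
  linarith

lemma norm_Jmap {w a : M} (hw : w ∈ H.W) (ha : a ∈ H.V) : ‖H.Jmap w a‖ = ‖w‖ * ‖a‖ := by
  rw [← sq_eq_sq₀ (norm_nonneg _) (by positivity), ← real_inner_self_eq_norm_sq,
    H.inner_Jmap_Jmap hw hw ha, real_inner_self_eq_norm_sq, mul_pow]

lemma bracket_Jmap {w a : M} (hw : w ∈ H.W) (ha : a ∈ H.V) :
    H.bracket a (H.Jmap w a) = ‖a‖ ^ 2 • w := by
  set u := H.bracket a (H.Jmap w a) - ‖a‖ ^ 2 • w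
  have huW : u ∈ H.W := H.W.sub_mem (H.bracket_mem_W _ _) (H.W.smul_mem _ hw)
  -- `⟪z, [a, J_w a]⟫ = ⟪J_z a, J_w a⟫ = ⟪z, w⟫ ‖a‖²` for every `z ∈ W`; take `z = u`.
  have hu : ⟪u, u⟫ = 0 := by
    rw [inner_sub_right, ← H.Jmap_inner u huW a ha _ (H.Jmap_mem_V w hw a ha),
      H.inner_Jmap_Jmap huW hw ha, real_inner_smul_right]
    ring
  exact sub_eq_zero.mp (inner_self_eq_zero.mp hu)

lemma exists_bracket_eq_of_not_coercive {S₀ : M → ℝ}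
    (hS_smul : ∀ (c : ℝ), ∀ v ∈ H.V, S₀ (c • v) = |c| * S₀ v)
    {c₀ : ℝ} (hS_cont : ∀ v ∈ H.V, S₀ v ≤ c₀ * ‖v‖)
    (hweak : ¬ ∃ c > (0 : ℝ), ∀ v ∈ H.V, c * ‖v‖ ≤ S₀ v)
    {w : M} (hw : w ∈ H.W) {δ : ℝ} (hδ : 0 < δ) :
    ∃ a ∈ H.V, ∃ b ∈ H.V, H.bracket a b = w ∧ S₀ a + S₀ b < δ := by
  obtain ⟨r, hr, hrw⟩ := exists_pos_mul_lt (half_pos hδ) (c₀ * ‖w‖)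
  obtain ⟨u, huV, hu1, hSu⟩ :=
    exists_norm_eq_one_lt_of_not_coercive hS_smul hweak (mul_pos (half_pos hδ) hr)
  have hJu := H.Jmap_mem_V w hw u huV
  refine ⟨r⁻¹ • u, H.V.smul_mem _ huV, r • H.Jmap w u, H.V.smul_mem _ hJu, ?_, ?_⟩
  · rw [map_smul, map_smul, smul_apply, H.bracket_Jmap hw huV, hu1,
      smul_smul, mul_inv_cancel₀ hr.ne', one_pow, one_smul, one_smul]
  · have ha : S₀ (r⁻¹ • u) < δ / 2 := by
      rw [hS_smul _ _ huV, abs_inv, abs_of_pos hr, inv_mul_lt_iff₀ hr, mul_comm]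
      exact hSu
    have hb : S₀ (r • H.Jmap w u) < δ / 2 := by
      calc S₀ (r • H.Jmap w u) ≤ r * (c₀ * ‖w‖) := by
            rw [hS_smul _ _ hJu, abs_of_pos hr]
            gcongr
            simpa [H.norm_Jmap hw huV, hu1] using hS_cont _ hJu
        _ < δ / 2 := by rwa [mul_comm]
    linarith

lemma bracket_ellipseLoop (a b : M) (t : ℝ) :
    H.bracket (ellipseLoop a b t) (ellipseLoopDeriv a b t)
      = (2 * π * (1 - Real.cos (2 * π * t))) • H.bracket a b := by
  simp only [ellipseLoop, ellipseLoopDeriv, map_add, map_smul, add_apply, smul_apply,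
    H.bracket_self, H.bracket_skew b a, smul_zero, smul_neg, add_zero, zero_add, smul_smul]
  match_scalars
  linear_combination (2 * π) * Real.sin_sq_add_cos_sq (2 * π * t)

/-- The `W`-component of the left translate by `p` of the horizontal lift of `η = ellipseLoop a b`:
left translation by `p` adds `½ [π₁ p, ·]`, and `π t - ½ sin 2πt` is a primitive of
`½ [η, η'] = π (1 - cos 2πt) [a, b]`. -/
noncomputable def ellipseLift (p a b : M) (t : ℝ) : M :=
  (2⁻¹ : ℝ) • H.bracket (H.proj1 p) (ellipseLoop a b t)
    + (π * t - 2⁻¹ * Real.sin (2 * π * t)) • H.bracket a b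

noncomputable def ellipseLiftDeriv (p a b : M) (t : ℝ) : M :=
  (2⁻¹ : ℝ) • H.bracket (H.proj1 p + ellipseLoop a b t) (ellipseLoopDeriv a b t)

lemma hasDerivAt_ellipseLift (p a b : M) (t : ℝ) :
    HasDerivAt (H.ellipseLift p a b) (H.ellipseLiftDeriv p a b t) t := by
  have h₁ := (H.bracket (H.proj1 p)).hasFDerivAt.comp_hasDerivAt t (hasDerivAt_ellipseLoop a b t)
  have h₂ := ((hasDerivAt_id t).const_mul π).sub
    ((((hasDerivAt_id t).const_mul (2 * π)).sin).const_mul (2⁻¹ : ℝ))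
  refine ((h₁.const_smul (2⁻¹ : ℝ)).add (h₂.smul_const (H.bracket a b))).congr_deriv ?_
  rw [ellipseLiftDeriv, map_add, add_apply, smul_add, H.bracket_ellipseLoop, smul_smul]
  simp only [id_eq, mul_one]
  congr 1
  match_scalars
  ring

lemma continuous_ellipseLiftDeriv (p a b : M) : Continuous (H.ellipseLiftDeriv p a b) := by
  unfold ellipseLiftDeriv ellipseLoop
  have := continuous_ellipseLoopDeriv a b
  fun_prop

lemma ellipseLift_mem (p a b : M) (t : ℝ) : H.ellipseLift p a b t ∈ H.W :=
  H.W.add_mem (H.W.smul_mem _ (H.bracket_mem_W _ _)) (H.W.smul_mem _ (H.bracket_mem_W _ _))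

lemma ellipseLiftDeriv_mem (p a b : M) (t : ℝ) : H.ellipseLiftDeriv p a b t ∈ H.W :=
  H.W.smul_mem _ (H.bracket_mem_W _ _)

noncomputable def loopCurve (p a b : M) : PC1Curve M where
  toFun t := p + (ellipseLoop a b t + H.ellipseLift p a b t)
  deriv t := ellipseLoopDeriv a b t + H.ellipseLiftDeriv p a b t
  continuousOn := by
    refine Continuous.continuousOn (continuous_iff_continuousAt.mpr fun t => ?_)
    exact (((hasDerivAt_ellipseLoop a b t).add (H.hasDerivAt_ellipseLift p a b t)).const_add
      p).continuousAt
  exc := ∅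
  exc_finite := Set.finite_empty
  hasDeriv t _ :=
    ((hasDerivAt_ellipseLoop a b t).add (H.hasDerivAt_ellipseLift p a b t)).const_add p
  deriv_integrable :=
    ((continuous_ellipseLoopDeriv a b).add (H.continuous_ellipseLiftDeriv p a b)).intervalIntegrable
      0 1

variable {H}

lemma proj1_loopCurve_deriv (p : M) {a b : M} (ha : a ∈ H.V) (hb : b ∈ H.V) (t : ℝ) :
    H.proj1 ((H.loopCurve p a b).deriv t) = ellipseLoopDeriv a b t :=
  H.proj1_add_of_mem (ellipseLoopDeriv_mem ha hb t) (H.ellipseLiftDeriv_mem p a b t)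

lemma loopCurve_isHorizontal (p : M) {a b : M} (ha : a ∈ H.V) (hb : b ∈ H.V) :
    IsHorizontal H (H.loopCurve p a b) := by
  intro t _
  show H.proj2 (ellipseLoopDeriv a b t + H.ellipseLiftDeriv p a b t) = _
  have hγ : H.proj1 ((H.loopCurve p a b).toFun t) = H.proj1 p + ellipseLoop a b t := by
    rw [loopCurve, map_add, H.proj1_add_of_mem (ellipseLoop_mem ha hb t) (H.ellipseLift_mem p a b t)]
  rw [hγ, proj1_loopCurve_deriv p ha hb,
    H.proj2_add_of_mem (ellipseLoopDeriv_mem ha hb t) (H.ellipseLiftDeriv_mem p a b t)]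
  rfl

lemma loopCurve_zero (p a b : M) : (H.loopCurve p a b).toFun 0 = p := by
  simp [loopCurve, ellipseLift, ellipseLoop_zero]

lemma loopCurve_one (p a b : M) : (H.loopCurve p a b).toFun 1 = p + π • H.bracket a b := by
  simp [loopCurve, ellipseLift, ellipseLoop_one]

lemma subFinslerLength_loopCurve_le {S₀ : M → ℝ}
    (hS_add : ∀ u ∈ H.V, ∀ v ∈ H.V, S₀ (u + v) ≤ S₀ u + S₀ v)
    (hS_smul : ∀ (c : ℝ), ∀ v ∈ H.V, S₀ (c • v) = |c| * S₀ v)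
    (p : M) {a b : M} (ha : a ∈ H.V) (hb : b ∈ H.V) :
    subFinslerLength H S₀ (H.loopCurve p a b) ≤ 2 * π * (S₀ a + S₀ b) := by
  -- Bounding the norm of the integral needs no integrability of the integrand.
  have hbound : ∀ t ∈ Set.uIoc (0 : ℝ) 1,
      ‖S₀ (H.proj1 ((H.loopCurve p a b).deriv t))‖ ≤ 2 * π * (S₀ a + S₀ b) := by
    intro t _
    rw [proj1_loopCurve_deriv p ha hb, Real.norm_of_nonneg
      (nonneg_of_add_le_of_smul_eq hS_add hS_smul (ellipseLoopDeriv_mem ha hb t))]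
    exact ellipseLoopDeriv_le hS_add hS_smul ha hb t
  have h := intervalIntegral.norm_integral_le_of_norm_le_const hbound
  rw [sub_zero, abs_one, mul_one] at h
  exact (le_abs_self _).trans h

lemma subFinslerLength_nonneg {S₀ : M → ℝ} (hS_nonneg : ∀ v ∈ H.V, 0 ≤ S₀ v) (γ : PC1Curve M) :
    0 ≤ subFinslerLength H S₀ γ :=
  intervalIntegral.integral_nonneg zero_le_one fun _ _ => hS_nonneg _ (H.proj1_mem _)

lemma subFinslerDist_eq_zero_of_forall_lt {S₀ : M → ℝ} (hS_nonneg : ∀ v ∈ H.V, 0 ≤ S₀ v)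
    {p q : M} (h : ∀ ε > (0 : ℝ), ∃ γ : PC1Curve M, IsHorizontal H γ ∧ γ.toFun 0 = p ∧
      γ.toFun 1 = q ∧ subFinslerLength H S₀ γ < ε) :
    subFinslerDist H S₀ p q = 0 := by
  refine le_antisymm (le_of_forall_pos_lt_add fun ε hε => ?_) (Real.sInf_nonneg ?_)
  · obtain ⟨γ, hγ, h0, h1, hlt⟩ := h ε hε
    refine lt_of_le_of_lt (csInf_le ⟨0, ?_⟩ ⟨γ, hγ, h0, h1, rfl⟩) (by rwa [zero_add])
    rintro _ ⟨γ', -, -, -, rfl⟩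
    exact H.subFinslerLength_nonneg hS_nonneg γ'
  · rintro _ ⟨γ', -, -, -, rfl⟩
    exact H.subFinslerLength_nonneg hS_nonneg γ'

end HTypeGroup

theorem statement_8_general {M : Type*} [NormedAddCommGroup M] [InnerProductSpace ℝ M]
    [CompleteSpace M] (H : HTypeGroup M) (S₀ : M → ℝ)
    (hS_add : ∀ u ∈ H.V, ∀ v ∈ H.V, S₀ (u + v) ≤ S₀ u + S₀ v)
    (hS_smul : ∀ (c : ℝ), ∀ v ∈ H.V, S₀ (c • v) = |c| * S₀ v)
    (c₀ : ℝ) (hS_cont : ∀ v ∈ H.V, S₀ v ≤ c₀ * ‖v‖)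
    (h_strictly_weak : ¬ ∃ c > (0 : ℝ), ∀ v ∈ H.V, c * ‖v‖ ≤ S₀ v) :
    ∀ p q : M, H.proj1 p = H.proj1 q →
      subFinslerDist H S₀ p q = 0 ∧
      ∀ ε > (0 : ℝ), ∃ γ : PC1Curve M, IsHorizontal H γ ∧ γ.toFun 0 = p ∧ γ.toFun 1 = q ∧
        subFinslerLength H S₀ γ < ε := by
  intro p q hpq
  have hw : π⁻¹ • (q - p) ∈ H.W :=
    H.W.smul_mem _ (H.mem_W_of_proj1_eq_zero (by rw [map_sub, hpq, sub_self]))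
  have hcurves : ∀ ε > (0 : ℝ), ∃ γ : PC1Curve M, IsHorizontal H γ ∧ γ.toFun 0 = p ∧
      γ.toFun 1 = q ∧ subFinslerLength H S₀ γ < ε := by
    intro ε hε
    obtain ⟨a, ha, b, hb, hab, hSab⟩ := H.exists_bracket_eq_of_not_coercive hS_smul hS_cont
      h_strictly_weak hw (show 0 < ε / (2 * π) by positivity)
    refine ⟨H.loopCurve p a b, H.loopCurve_isHorizontal p ha hb, H.loopCurve_zero p a b, ?_, ?_⟩
    · rw [H.loopCurve_one, hab, smul_inv_smul₀ Real.pi_ne_zero, add_sub_cancel]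
    · calc subFinslerLength H S₀ (H.loopCurve p a b) ≤ 2 * π * (S₀ a + S₀ b) :=
            H.subFinslerLength_loopCurve_le hS_add hS_smul p ha hb
        _ < 2 * π * (ε / (2 * π)) := by gcongr
        _ = ε := by field_simp
  exact ⟨H.subFinslerDist_eq_zero_of_forall_lt
    (fun v hv => nonneg_of_add_le_of_smul_eq hS_add hS_smul hv) hcurves, hcurves⟩

/-- For a strictly weak, left invariant sub-Finsler metric `S₀` on a
Hilbertian H-type group `M = V ⊕ W`, whenever `π₁(p) = π₁(q)` the sub-Finsler distance
vanishes: `ρ_S(p, q) = 0`; that is, for every `ε > 0` there is a horizontal curve from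
`p` to `q` of sub-Finsler length `< ε`. -/
theorem statement_8 {M : Type*} [NormedAddCommGroup M] [InnerProductSpace ℝ M]
    [CompleteSpace M] (H : HTypeGroup M) (S₀ : M → ℝ)
    (hS_add : ∀ u ∈ H.V, ∀ v ∈ H.V, S₀ (u + v) ≤ S₀ u + S₀ v)
    (hS_smul : ∀ (c : ℝ), ∀ v ∈ H.V, S₀ (c • v) = |c| * S₀ v)
    (hS_def : ∀ v ∈ H.V, S₀ v = 0 → v = 0)
    (c₀ : ℝ) (hc₀ : 0 < c₀) (hS_cont : ∀ v ∈ H.V, S₀ v ≤ c₀ * ‖v‖)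
    (h_strictly_weak : ¬ ∃ c > (0 : ℝ), ∀ v ∈ H.V, c * ‖v‖ ≤ S₀ v) :
    ∀ p q : M, H.proj1 p = H.proj1 q →
      subFinslerDist H S₀ p q = 0 ∧
      ∀ ε > (0 : ℝ), ∃ γ : PC1Curve M, IsHorizontal H γ ∧ γ.toFun 0 = p ∧ γ.toFun 1 = q ∧
        subFinslerLength H S₀ γ < ε :=
  statement_8_general H S₀ hS_add hS_smul c₀ hS_cont h_strictly_weak
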